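/- arXiv:2503.12965 — 2 statements merged into one kernel-verified Lean document; each statement's English description precedes it below -/
import Mathlib

section
/- Let (A, ≺) be a subordination algebra with slanted implication a ⇒_≺ b := ⋁{c | a ∧ c ≺ b}. Then the inequality (⊤ ⇒_≺ b) ∧ (b ⇒_≺ c) ≤ ⊤ ⇒_≺ c holds in A^δ for all b, c ∈ A if and only if ≺ satisfies cumulative transitivity restricted as follows: for all a, b, c ∈ A, a ≺ b and a ∧ b ≺ c imply a ≺ c. -/
/-- A subordination algebra relation on a bounded distributive lattice. -/
structure SubordAlg (A : Type*) [DistribLattice A] [BoundedOrder A] where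
  prec : A → A → Prop
  prec_bot : prec ⊥ ⊥
  prec_top : prec ⊤ ⊤
  prec_and : ∀ {a b c : A}, prec a b → prec a c → prec a (b ⊓ c)
  prec_or : ∀ {a b c : A}, prec a c → prec b c → prec (a ⊔ b) c
  prec_wosi : ∀ {a b c d : A}, a ≤ b → prec b c → c ≤ d → prec a d

/-- A presentation of the canonical extension of a bounded (distributive) lattice `A`:
a complete lattice `Aδ` together with a dense and compact lattice embedding. -/
structure CanExt (A : Type*) [DistribLattice A] [BoundedOrder A]
    (Aδ : Type*) [CompleteLattice Aδ] where
  e : A → Aδ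
  le_iff : ∀ a b : A, a ≤ b ↔ e a ≤ e b
  map_inf : ∀ a b : A, e (a ⊓ b) = e a ⊓ e b
  map_sup : ∀ a b : A, e (a ⊔ b) = e a ⊔ e b
  map_bot : e ⊥ = ⊥
  map_top : e ⊤ = ⊤
  dense_closed : ∀ u : Aδ,
    u = sSup {k | (∃ F : Set A, F.Nonempty ∧ k = sInf (e '' F)) ∧ k ≤ u}
  dense_open : ∀ u : Aδ,
    u = sInf {o | (∃ I : Set A, I.Nonempty ∧ o = sSup (e '' I)) ∧ u ≤ o}
  compact : ∀ F I : Set A, F.Nonempty → I.Nonempty →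
    sInf (e '' F) ≤ sSup (e '' I) →
    ∃ F' I' : Set A, F' ⊆ F ∧ I' ⊆ I ∧ F'.Finite ∧ I'.Finite ∧
      sInf (e '' F') ≤ sSup (e '' I')

/-- Closed elements of the canonical extension: meets of nonempty subsets of `A`. -/
def CanExt.IsClosed {A : Type*} [DistribLattice A] [BoundedOrder A]
    {Aδ : Type*} [CompleteLattice Aδ] (C : CanExt A Aδ) (k : Aδ) : Prop :=
  ∃ F : Set A, F.Nonempty ∧ k = sInf (C.e '' F)

/-- Open elements of the canonical extension: joins of nonempty subsets of `A`. -/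
def CanExt.IsOpen {A : Type*} [DistribLattice A] [BoundedOrder A]
    {Aδ : Type*} [CompleteLattice Aδ] (C : CanExt A Aδ) (o : Aδ) : Prop :=
  ∃ I : Set A, I.Nonempty ∧ o = sSup (C.e '' I)

/-- The slanted implication `a ⇒_≺ b := ⋁{c | a ⊓ c ≺ b}` induced by a relation. -/
def slantImp {A : Type*} [DistribLattice A] [BoundedOrder A]
    {Aδ : Type*} [CompleteLattice Aδ] (C : CanExt A Aδ)
    (R : A → A → Prop) (a b : A) : Aδ :=
  sSup (C.e '' {c | R (a ⊓ c) b})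

/-- The slanted co-implication `a ⩾_≺ b := ⋀{c | b ≺ a ⊔ c}` induced by a relation. -/
def slantCoimp {A : Type*} [DistribLattice A] [BoundedOrder A]
    {Aδ : Type*} [CompleteLattice Aδ] (C : CanExt A Aδ)
    (R : A → A → Prop) (a b : A) : Aδ :=
  sInf (C.e '' {c | R b (a ⊔ c)})

/-- The slanted negation `¬a := ⋁{c | a ⊓ c ≺ ⊥}`. -/
def slantNeg {A : Type*} [DistribLattice A] [BoundedOrder A]
    {Aδ : Type*} [CompleteLattice Aδ] (C : CanExt A Aδ)
    (R : A → A → Prop) (a : A) : Aδ :=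
  sSup (C.e '' {c | R (a ⊓ c) ⊥})

/-- The slanted co-negation `∼a := ⋀{c | ⊤ ≺ a ⊔ c}`. -/
def slantSim {A : Type*} [DistribLattice A] [BoundedOrder A]
    {Aδ : Type*} [CompleteLattice Aδ] (C : CanExt A Aδ)
    (R : A → A → Prop) (a : A) : Aδ :=
  sInf (C.e '' {c | R ⊤ (a ⊔ c)})

/-- A slanted Heyting algebra over a canonical extension `C`. -/
structure SlantedHeyting (A : Type*) [DistribLattice A] [BoundedOrder A]
    (Aδ : Type*) [CompleteLattice Aδ] (C : CanExt A Aδ) where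
  imp : A → A → Aδ
  imp_open : ∀ a b : A, C.IsOpen (imp a b)
  imp_inf : ∀ a b₁ b₂ : A, imp a (b₁ ⊓ b₂) = imp a b₁ ⊓ imp a b₂
  imp_top : ∀ a : A, imp a ⊤ = ⊤
  sup_imp : ∀ a₁ a₂ b : A, imp (a₁ ⊔ a₂) b = imp a₁ b ⊓ imp a₂ b
  bot_imp : ∀ b : A, imp ⊥ b = ⊤
  resid : ∀ a b c : A, C.e c ≤ imp a b ↔ C.e (a ⊓ c) ≤ imp ⊤ b

/-- A slanted co-Heyting algebra over a canonical extension `C`. -/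
structure SlantedCoHeyting (A : Type*) [DistribLattice A] [BoundedOrder A]
    (Aδ : Type*) [CompleteLattice Aδ] (C : CanExt A Aδ) where
  coimp : A → A → Aδ
  coimp_closed : ∀ a b : A, C.IsClosed (coimp a b)
  coimp_sup : ∀ a b₁ b₂ : A, coimp a (b₁ ⊔ b₂) = coimp a b₁ ⊔ coimp a b₂
  coimp_bot : ∀ a : A, coimp a ⊥ = ⊥
  inf_coimp : ∀ a₁ a₂ b : A, coimp (a₁ ⊓ a₂) b = coimp a₁ b ⊔ coimp a₂ b
  top_coimp : ∀ b : A, coimp ⊤ b = ⊥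
  resid : ∀ a b c : A, coimp a b ≤ C.e c ↔ coimp ⊥ b ≤ C.e (a ⊔ c)

/-- The π-extension of a slanted implication on a closed first argument and open
second argument: `k ⇒^π o := ⋁{a ⇒ b | k ≤ a, b ≤ o}`. -/
def impPiKO {A : Type*} [DistribLattice A] [BoundedOrder A]
    {Aδ : Type*} [CompleteLattice Aδ] {C : CanExt A Aδ}
    (H : SlantedHeyting A Aδ C) (k o : Aδ) : Aδ :=
  sSup {u | ∃ a b : A, u = H.imp a b ∧ k ≤ C.e a ∧ C.e b ≤ o}

/-- The π-extension of a slanted implication on arbitrary arguments. -/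
def impPi {A : Type*} [DistribLattice A] [BoundedOrder A]
    {Aδ : Type*} [CompleteLattice Aδ] {C : CanExt A Aδ}
    (H : SlantedHeyting A Aδ C) (u v : Aδ) : Aδ :=
  sInf {w | ∃ k o : Aδ, C.IsClosed k ∧ C.IsOpen o ∧ k ≤ u ∧ v ≤ o ∧ w = impPiKO H k o}

/-! The set `{c | a ⊓ c ≺ b}` is an ideal of `A`, and `a ⇒_≺ b` is its join in `Aδ`. By
compactness, a closed element below the join of an ideal lies below a single member of it
(the join of a finite part of the ideal is again in the ideal). So `e c ≤ a ⇒_≺ b` holds exactly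
when `a ⊓ c ≺ b`, and an inequality between slanted implications may be tested on closed
elements, each of which is then caught below some `f ∈ A` with `f ≺ b` and `f ⊓ b ≺ c`. -/

namespace CanExt

variable {A : Type*} [DistribLattice A] [BoundedOrder A]
    {Aδ : Type*} [CompleteLattice Aδ] (C : CanExt A Aδ)

def toBoundedLatticeHom : BoundedLatticeHom A Aδ where
  toFun := C.e
  map_sup' := C.map_sup
  map_inf' := C.map_inf
  map_top' := C.map_top
  map_bot' := C.map_bot

lemma sInf_image_eq_finset_inf (s : Finset A) : sInf (C.e '' s) = C.e (s.inf id) := by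
  rw [← Finset.inf_eq_sInf_image]
  exact (map_finset_inf C.toBoundedLatticeHom s id).symm

lemma sSup_image_eq_finset_sup (s : Finset A) : sSup (C.e '' s) = C.e (s.sup id) := by
  rw [← Finset.sup_eq_sSup_image]
  exact (map_finset_sup C.toBoundedLatticeHom s id).symm

theorem exists_le_of_sInf_le_sSup_ideal (I : Order.Ideal A) {F : Set A} (hF : F.Nonempty)
    (h : sInf (C.e '' F) ≤ sSup (C.e '' I)) : ∃ f ∈ I, sInf (C.e '' F) ≤ C.e f := by
  obtain ⟨F', I', hF'F, hI'I, hF', hI', hle⟩ := C.compact F I hF I.nonempty h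
  lift F' to Finset A using hF'
  lift I' to Finset A using hI'
  rw [sInf_image_eq_finset_inf, sSup_image_eq_finset_sup, ← C.le_iff] at hle
  refine ⟨F'.inf id, I.lower hle ?_, ?_⟩
  · exact (Order.Ideal.finsetSup_mem_iff I).2 fun i hi => hI'I hi
  · rw [← sInf_image_eq_finset_inf]
    exact sInf_le_sInf (Set.image_mono hF'F)

theorem mem_of_le_sSup_ideal (I : Order.Ideal A) {a : A} (h : C.e a ≤ sSup (C.e '' I)) :
    a ∈ I := by
  obtain ⟨f, hf, haf⟩ := C.exists_le_of_sInf_le_sSup_ideal I (Set.singleton_nonempty a)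
    (by rwa [Set.image_singleton, sInf_singleton])
  rw [Set.image_singleton, sInf_singleton, ← C.le_iff] at haf
  exact I.lower haf hf

theorem le_of_forall_isClosed_le {u v : Aδ} (h : ∀ k, C.IsClosed k → k ≤ u → k ≤ v) : u ≤ v := by
  rw [C.dense_closed u]
  exact sSup_le fun k ⟨hk, hku⟩ => h k hk hku

end CanExt

namespace SubordAlg

variable {A : Type*} [DistribLattice A] [BoundedOrder A] (S : SubordAlg A)

def slantIdeal (a b : A) : Order.Ideal A where
  carrier := {c | S.prec (a ⊓ c) b}
  lower' _ _ hyx hx := S.prec_wosi (inf_le_inf_left a hyx) hx le_rfl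
  nonempty' := ⟨⊥, S.prec_wosi inf_le_right S.prec_bot bot_le⟩
  directed' x hx y hy :=
    ⟨x ⊔ y, show S.prec (a ⊓ (x ⊔ y)) b by rw [inf_sup_left]; exact S.prec_or hx hy,
      le_sup_left, le_sup_right⟩

variable {Aδ : Type*} [CompleteLattice Aδ] (C : CanExt A Aδ)

lemma le_slantImp_iff {a b c : A} : C.e c ≤ slantImp C S.prec a b ↔ S.prec (a ⊓ c) b :=
  ⟨fun h => C.mem_of_le_sSup_ideal (S.slantIdeal a b) h, fun h => le_sSup ⟨c, h, rfl⟩⟩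

lemma exists_le_of_isClosed_le_slantImp {k : Aδ} (hk : C.IsClosed k) {a b : A}
    (h : k ≤ slantImp C S.prec a b) : ∃ c, S.prec (a ⊓ c) b ∧ k ≤ C.e c := by
  obtain ⟨F, hF, rfl⟩ := hk
  exact C.exists_le_of_sInf_le_sSup_ideal (S.slantIdeal a b) hF h

end SubordAlg

theorem stmt15 {A : Type*} [DistribLattice A] [BoundedOrder A]
    {Aδ : Type*} [CompleteLattice Aδ] (C : CanExt A Aδ) (S : SubordAlg A) :
    (∀ b c : A,
      slantImp C S.prec ⊤ b ⊓ slantImp C S.prec b c ≤ slantImp C S.prec ⊤ c) ↔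
    (∀ a b c : A, S.prec a b → S.prec (a ⊓ b) c → S.prec a c) := by
  constructor
  · intro h a b c hab habc
    have hb : C.e a ≤ slantImp C S.prec ⊤ b := (S.le_slantImp_iff C).2 (by rwa [top_inf_eq])
    have hbc : C.e a ≤ slantImp C S.prec b c := (S.le_slantImp_iff C).2 (by rwa [inf_comm])
    simpa only [top_inf_eq] using (S.le_slantImp_iff C).1 ((le_inf hb hbc).trans (h b c))
  · intro h b c
    refine C.le_of_forall_isClosed_le fun k hk hkle => ?_
    obtain ⟨f₁, hf₁, hkf₁⟩ := S.exists_le_of_isClosed_le_slantImp C hk (hkle.trans inf_le_left)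
    obtain ⟨f₂, hf₂, hkf₂⟩ := S.exists_le_of_isClosed_le_slantImp C hk (hkle.trans inf_le_right)
    have hb : S.prec (f₁ ⊓ f₂) b := S.prec_wosi (by simp) hf₁ le_rfl
    have hbc : S.prec (f₁ ⊓ f₂ ⊓ b) c :=
      S.prec_wosi (le_inf inf_le_right (inf_le_left.trans inf_le_right)) hf₂ le_rfl
    calc k ≤ C.e (f₁ ⊓ f₂) := by rw [C.map_inf]; exact le_inf hkf₁ hkf₂
      _ ≤ slantImp C S.prec ⊤ c :=
        (S.le_slantImp_iff C).2 (by rw [top_inf_eq]; exact h _ _ _ hb hbc)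
end

section
/- Let (A, ≺) be a subordination algebra with ¬a := ⋁{c | a ∧ c ≺ ⊥}. Then the inequality ¬(a ∧ b) ≤ ¬a ∨ ¬b holds in A^δ for all a, b ∈ A if and only if for all a, b, d ∈ A: d ∧ a ∧ b ≺ ⊥ implies there exist e, f ∈ A with d ≤ e ∨ f, e ∧ a ≺ ⊥, and f ∧ b ≺ ⊥. -/
/-! The elements `c` with `a ⊓ c ≺ ⊥` form an order ideal of `A` (by (OR) and (WO-SI)), and `¬a`
is the join of its image in `Aδ`. By compactness, `d ∈ A` lies below the join of an ideal `I` iff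
`d ∈ I`, and below the join of the joins of `I` and `J` iff `d ≤ i ⊔ j` for some `i ∈ I`, `j ∈ J`.
Since `¬(a ⊓ b)` is itself a join of elements of `A`, the inequality `¬(a ⊓ b) ≤ ¬a ∨ ¬b` therefore
amounts to the stated splitting property of every `d` with `d ⊓ a ⊓ b ≺ ⊥`. -/

namespace CanExt

variable {A : Type*} [DistribLattice A] [BoundedOrder A] {Aδ : Type*} [CompleteLattice Aδ]
  (C : CanExt A Aδ)

theorem monotone_e : Monotone C.e := fun a b ↦ (C.le_iff a b).mp

theorem exists_finset_le_sup_of_le_sSup {d : A} {I : Set A} (h : C.e d ≤ sSup (C.e '' I)) :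
    ∃ s : Finset A, ↑s ⊆ I ∧ d ≤ s.sup id := by
  classical
  rcases I.eq_empty_or_nonempty with rfl | hI
  · refine ⟨∅, by simp, (C.le_iff d ⊥).mpr ?_⟩
    simpa [C.map_bot] using h
  obtain ⟨F', I', hF', hI', -, hI'fin, hle⟩ :=
    C.compact {d} I (Set.singleton_nonempty d) hI (by simpa using h)
  refine ⟨hI'fin.toFinset, by simpa using hI', (C.le_iff _ _).mpr ?_⟩
  calc C.e d ≤ sInf (C.e '' F') := le_sInf <| by
        rintro _ ⟨c, hc, rfl⟩
        rw [hF' hc]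
    _ ≤ sSup (C.e '' I') := hle
    _ ≤ C.e (hI'fin.toFinset.sup id) := sSup_le <| by
        rintro _ ⟨c, hc, rfl⟩
        exact C.monotone_e (Finset.le_sup (f := id) (hI'fin.mem_toFinset.mpr hc))

theorem le_sSup_image_ideal_iff {d : A} (I : Order.Ideal A) :
    C.e d ≤ sSup (C.e '' I) ↔ d ∈ I := by
  refine ⟨fun h ↦ ?_, fun hd ↦ le_sSup ⟨d, hd, rfl⟩⟩
  obtain ⟨s, hsI, hds⟩ := C.exists_finset_le_sup_of_le_sSup h
  exact I.lower hds ((Order.Ideal.finsetSup_mem_iff I).mpr fun c hc ↦ hsI hc)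

theorem exists_le_sup_of_le_sSup_sup {d : A} (I J : Order.Ideal A)
    (h : C.e d ≤ sSup (C.e '' I) ⊔ sSup (C.e '' J)) : ∃ i ∈ I, ∃ j ∈ J, d ≤ i ⊔ j := by
  have hsup : sSup (C.e '' I) ⊔ sSup (C.e '' J) ≤ sSup (C.e '' ↑(I ⊔ J)) :=
    sup_le (sSup_le_sSup (Set.image_mono (Order.Ideal.coe_subset_coe.mpr le_sup_left)))
      (sSup_le_sSup (Set.image_mono (Order.Ideal.coe_subset_coe.mpr le_sup_right)))
  exact Order.Ideal.mem_sup.mp ((C.le_sSup_image_ideal_iff _).mp (h.trans hsup))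

end CanExt

namespace SubordAlg

variable {A : Type*} [DistribLattice A] [BoundedOrder A] (S : SubordAlg A)

def negIdeal (a : A) : Order.Ideal A where
  carrier := {c | S.prec (a ⊓ c) ⊥}
  lower' _ _ hdc hc := S.prec_wosi (inf_le_inf_left a hdc) hc le_rfl
  nonempty' := ⟨⊥, S.prec_wosi (by simp) S.prec_bot le_rfl⟩
  directed' c hc d hd := ⟨c ⊔ d, by
    rw [Set.mem_ofPred_eq, inf_sup_left]
    exact S.prec_or hc hd, le_sup_left, le_sup_right⟩

variable {Aδ : Type*} [CompleteLattice Aδ] (C : CanExt A Aδ)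

theorem le_slantNeg_iff {a d : A} : C.e d ≤ slantNeg C S.prec a ↔ S.prec (a ⊓ d) ⊥ :=
  C.le_sSup_image_ideal_iff (S.negIdeal a)

theorem slantNeg_le_sup_iff {a b c : A} :
    slantNeg C S.prec c ≤ slantNeg C S.prec a ⊔ slantNeg C S.prec b ↔
      ∀ d, S.prec (c ⊓ d) ⊥ → ∃ e f, d ≤ e ⊔ f ∧ S.prec (a ⊓ e) ⊥ ∧ S.prec (b ⊓ f) ⊥ := by
  constructor
  · intro h d hd
    obtain ⟨e, he, f, hf, hdef⟩ := C.exists_le_sup_of_le_sSup_sup (S.negIdeal a) (S.negIdeal b)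
      (((S.le_slantNeg_iff C).mpr hd).trans h)
    exact ⟨e, f, hdef, he, hf⟩
  · intro h
    refine sSup_le ?_
    rintro _ ⟨d, hd, rfl⟩
    obtain ⟨e, f, hdef, he, hf⟩ := h d hd
    calc C.e d ≤ C.e (e ⊔ f) := C.monotone_e hdef
      _ = C.e e ⊔ C.e f := C.map_sup e f
      _ ≤ slantNeg C S.prec a ⊔ slantNeg C S.prec b :=
        sup_le_sup ((S.le_slantNeg_iff C).mpr he) ((S.le_slantNeg_iff C).mpr hf)

end SubordAlg

theorem stmt19 {A : Type*} [DistribLattice A] [BoundedOrder A]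
    {Aδ : Type*} [CompleteLattice Aδ] (C : CanExt A Aδ) (S : SubordAlg A) :
    (∀ a b : A,
      slantNeg C S.prec (a ⊓ b) ≤ slantNeg C S.prec a ⊔ slantNeg C S.prec b) ↔
    (∀ a b d : A, S.prec (d ⊓ a ⊓ b) ⊥ →
      ∃ e f : A, d ≤ e ⊔ f ∧ S.prec (e ⊓ a) ⊥ ∧ S.prec (f ⊓ b) ⊥) := by
  simp only [S.slantNeg_le_sup_iff C, inf_comm, inf_left_comm]
end
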